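/- arXiv:1310.3477 — 8 statements merged into one kernel-verified Lean document; each statement's English description precedes it below -/
import Mathlib

section
/- If for some t ∈ ℝ every complex zero of Ξ_t is real, then for every t' > t every complex zero of Ξ_{t'} is real. -/
/-!
Let `μ` be the largest index with `Φ_μ ≠ 0`. With `w = e^{iz}`, `e^{iμz} Ξ_s(z)` is a polynomial
`Q_s(w)` of degree `2μ` whose coefficient of `w^{μ ± n}` is `Φ_n e^{s n²}`, and the zeros of `Ξ_s`
are all real iff the roots of `Q_s` all lie on the unit circle.

For real `c`, the operator `Q ↦ Q + ic (wQ' - μQ)` (the polynomial side of `1 + c d/dz`) keeps all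
roots of a degree-`2μ` polynomial on the unit circle: at a root `w` of the image that is not a root
of `Q` one gets `Re (wQ'(w)/Q(w)) = μ`, whereas `Re (w/(w - ρ)) - 1/2` has the sign of `|w| - 1`
for every `|ρ| = 1`. Composing the operators for `c` and `-c` multiplies the coefficient of
`w^{μ ± n}` by `1 + c²n²`; with `c² = (t' - t)/N`, the `N`-th iterate applied to `Q_t` tends to
`Q_{t'}` coefficientwise. The iterates keep their roots on the circle and their leading
coefficients bounded below, so `|Q_N(w)| ≥ b · | |w| - 1 |^{2μ}`, and a zero of the limit must lie
on the circle.
-/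

open Complex

/-- The deformation `Ξ_t(z) = Φ₀ + ∑_{n=1}^g Φₙ e^{t n²} (e^{inz} + e^{-inz})`. -/
noncomputable def Xi (g : ℕ) (Φ : ℕ → ℝ) (t : ℝ) (z : ℂ) : ℂ :=
  (Φ 0 : ℂ) + ∑ n ∈ Finset.Icc 1 g,
    (Φ n : ℂ) * (Real.exp (t * (n : ℝ) ^ 2) : ℂ) *
      (Complex.exp ((n : ℂ) * Complex.I * z) + Complex.exp (-((n : ℂ) * Complex.I * z)))

open Polynomial Filter Topology

noncomputable def eulerOp (μ : ℕ) (c : ℝ) : ℂ[X] →ₗ[ℂ] ℂ[X] :=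
  LinearMap.id + (I * c) • (LinearMap.mulLeft ℂ X ∘ₗ derivative - (μ : ℂ) • LinearMap.id)

section eulerOp
variable (μ : ℕ) (c : ℝ)

lemma eulerOp_apply (Q : ℂ[X]) :
    eulerOp μ c Q = Q + (I * c) • (X * derivative Q - (μ : ℂ) • Q) := rfl

lemma eval_eulerOp (Q : ℂ[X]) (w : ℂ) :
    (eulerOp μ c Q).eval w = Q.eval w + I * c * (w * Q.derivative.eval w - μ * Q.eval w) := by
  simp [eulerOp_apply]

lemma coeff_eulerOp (Q : ℂ[X]) (k : ℕ) :
    (eulerOp μ c Q).coeff k = (1 + I * c * (k - μ)) * Q.coeff k := by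
  rw [eulerOp_apply]
  cases k with
  | zero =>
    simp only [coeff_add, coeff_smul, coeff_sub, mul_coeff_zero, coeff_X_zero, zero_mul,
      smul_eq_mul, zero_sub, mul_neg, CharP.cast_eq_zero]
    ring
  | succ k =>
    simp only [coeff_add, coeff_smul, coeff_sub, coeff_X_mul, coeff_derivative, smul_eq_mul,
      Nat.cast_add, Nat.cast_one]
    ring

lemma eulerOp_X_pow (k : ℕ) :
    eulerOp μ c (X ^ k) = (1 + I * c * (k - μ)) • X ^ k := by
  ext n
  rw [coeff_eulerOp, coeff_smul, coeff_X_pow]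
  split_ifs with h <;> simp [h]

lemma one_add_I_mul_ne_zero (r : ℝ) : 1 + I * r ≠ 0 := by
  intro h
  simpa using congrArg re h

lemma natDegree_eulerOp (Q : ℂ[X]) : (eulerOp μ c Q).natDegree = Q.natDegree := by
  have hsupp : (eulerOp μ c Q).support = Q.support := by
    ext k
    have := one_add_I_mul_ne_zero (c * (k - μ))
    push_cast at this
    simp [coeff_eulerOp, mul_assoc, this]
  rw [natDegree, natDegree, degree, degree, hsupp]

lemma eulerOp_eulerOp_neg_X_pow (k : ℕ) :
    eulerOp μ c (eulerOp μ (-c) (X ^ k)) = (1 + c ^ 2 * (k - μ) ^ 2 : ℂ) • X ^ k := by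
  rw [eulerOp_X_pow, map_smul, eulerOp_X_pow, smul_smul]
  congr 1
  push_cast
  linear_combination (-(c : ℂ) ^ 2 * (k - μ) ^ 2) * I_mul_I

end eulerOp

def RootsOnUnitCircle (Q : ℂ[X]) : Prop := ∀ w, Q.IsRoot w → ‖w‖ = 1

lemma re_div_sub_of_norm_eq_one {w ρ : ℂ} (hρ : ‖ρ‖ = 1) (hw : w ≠ ρ) :
    (w / (w - ρ)).re = 1 / 2 + (‖w‖ ^ 2 - 1) / 2 * (1 / ‖w - ρ‖ ^ 2) := by
  have hwρ : normSq (w - ρ) ≠ 0 := by simpa [sub_eq_zero] using hw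
  replace hρ : normSq ρ = 1 := by rw [normSq_eq_norm_sq, hρ, one_pow]
  rw [← normSq_eq_norm_sq, ← normSq_eq_norm_sq, div_re]
  field_simp
  simp only [normSq_apply, sub_re, sub_im] at hρ ⊢
  linear_combination -hρ

lemma re_mul_eval_derivative_div_eval {Q : ℂ[X]} (hQ : RootsOnUnitCircle Q) {w : ℂ}
    (hw : Q.eval w ≠ 0) :
    (w * Q.derivative.eval w / Q.eval w).re
      = Q.natDegree / 2 + (‖w‖ ^ 2 - 1) / 2 * (Q.roots.map fun ρ => 1 / ‖w - ρ‖ ^ 2).sum := by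
  have hsum : w * Q.derivative.eval w / Q.eval w = (Q.roots.map fun ρ => w / (w - ρ)).sum := by
    rw [mul_div_assoc, (IsAlgClosed.splits Q).eval_derivative_div_eval_of_ne_zero hw,
      ← Multiset.sum_map_mul_left]
    simp only [mul_one_div]
  have hterm : ∀ ρ ∈ Q.roots, (w / (w - ρ)).re = 1 / 2 + (‖w‖ ^ 2 - 1) / 2 * (1 / ‖w - ρ‖ ^ 2) :=
    fun ρ hρ => re_div_sub_of_norm_eq_one (hQ ρ (isRoot_of_mem_roots hρ))
      (fun h => hw (h ▸ isRoot_of_mem_roots hρ))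
  rw [hsum, ← reLm_coe, map_multiset_sum, Multiset.map_map, Function.comp_def, reLm_coe,
    Multiset.map_congr rfl hterm, Multiset.sum_map_add, Multiset.sum_map_mul_left,
    Multiset.map_const', Multiset.sum_replicate, IsAlgClosed.card_roots_eq_natDegree, nsmul_eq_mul]
  ring

lemma norm_eq_one_of_re_mul_eval_derivative_div_eval {Q : ℂ[X]} (hQ : RootsOnUnitCircle Q)
    (hdeg : Q.natDegree ≠ 0) {w : ℂ} (hw : Q.eval w ≠ 0)
    (hre : (w * Q.derivative.eval w / Q.eval w).re = Q.natDegree / 2) :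
    ‖w‖ = 1 := by
  have hpos : 0 < (Q.roots.map fun ρ => 1 / ‖w - ρ‖ ^ 2).sum := by
    obtain ⟨ρ, hρ⟩ := Multiset.exists_mem_of_ne_zero ((IsAlgClosed.splits Q).roots_ne_zero hdeg)
    have : w - ρ ≠ 0 := sub_ne_zero.mpr fun h => hw (h ▸ isRoot_of_mem_roots hρ)
    refine (by positivity : 0 < 1 / ‖w - ρ‖ ^ 2).trans_le
      (Multiset.single_le_sum ?_ _ (Multiset.mem_map_of_mem _ hρ))
    simp only [Multiset.mem_map]
    rintro _ ⟨ρ', -, rfl⟩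
    positivity
  rw [re_mul_eval_derivative_div_eval hQ hw] at hre
  have hsq : ‖w‖ ^ 2 = 1 := by nlinarith
  exact (pow_eq_one_iff_of_nonneg (norm_nonneg w) two_ne_zero).mp hsq

theorem RootsOnUnitCircle.eulerOp {Q : ℂ[X]} (hQ : RootsOnUnitCircle Q) {μ : ℕ} (hμ : μ ≠ 0)
    (hdeg : Q.natDegree = 2 * μ) (c : ℝ) : RootsOnUnitCircle (eulerOp μ c Q) := by
  intro w hw
  by_cases hQw : Q.IsRoot w
  · exact hQ w hQw
  have hQw' : Q.eval w ≠ 0 := hQw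
  have hlog : 1 + I * c * (w * Q.derivative.eval w / Q.eval w - μ) = 0 := by
    rw [IsRoot, eval_eulerOp] at hw
    field_simp
    linear_combination hw
  have hc : c ≠ 0 := by
    rintro rfl
    simp at hlog
  refine norm_eq_one_of_re_mul_eval_derivative_div_eval hQ (by omega) hQw ?_
  have him : c * ((w * Q.derivative.eval w / Q.eval w).re - μ) = 0 := by
    simpa using congrArg im hlog
  rw [hdeg]
  push_cast
  linarith [(mul_eq_zero.mp him).resolve_left hc]

/-- `w ^ g (a₀ + ∑ₙ aₙ (wⁿ + w⁻ⁿ))`, which at `w = e^{iz}` is `e^{igz} (a₀ + ∑ₙ 2 aₙ cos nz)`. -/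
noncomputable def trigPoly (g : ℕ) (a : ℕ → ℂ) : ℂ[X] :=
  a 0 • X ^ g + ∑ n ∈ Finset.Icc 1 g, a n • (X ^ (g + n) + X ^ (g - n))

section trigPoly
variable {g : ℕ} (a : ℕ → ℂ)

lemma eval_trigPoly_exp (z : ℂ) :
    (trigPoly g a).eval (exp (I * z)) = exp (g * I * z)
      * (a 0 + ∑ n ∈ Finset.Icc 1 g, a n * (exp (n * I * z) + exp (-(n * I * z)))) := by
  have hpow : ∀ k : ℕ, exp (I * z) ^ k = exp (k * I * z) := fun k => by
    rw [← exp_nat_mul, mul_assoc]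
  simp only [trigPoly, eval_add, eval_smul, eval_finsetSum, eval_pow, eval_X, smul_eq_mul, hpow,
    mul_add, Finset.mul_sum]
  congr 1
  · ring
  refine Finset.sum_congr rfl fun n hn => ?_
  rw [Nat.cast_sub (Finset.mem_Icc.mp hn).2, Nat.cast_add, add_mul, add_mul, sub_mul, sub_mul,
    sub_eq_add_neg, exp_add, exp_add]
  ring

lemma coeff_trigPoly (k : ℕ) :
    (trigPoly g a).coeff k = a 0 * (if k = g then 1 else 0)
      + ∑ n ∈ Finset.Icc 1 g,
          a n * ((if k = g + n then 1 else 0) + (if k = g - n then 1 else 0)) := by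
  simp only [trigPoly, coeff_add, coeff_smul, finsetSum_coeff, coeff_X_pow, smul_eq_mul]

lemma coeff_trigPoly_zero (hg : g ≠ 0) : (trigPoly g a).coeff 0 = a g := by
  rw [coeff_trigPoly, if_neg (by omega), mul_zero, zero_add,
    Finset.sum_eq_single_of_mem g (by simp; omega)]
  · rw [if_neg (by omega), if_pos (by omega)]
    ring
  · intro n hn hng
    rw [Finset.mem_Icc] at hn
    rw [if_neg (by omega), if_neg (by omega)]
    ring

lemma coeff_trigPoly_two_mul (hg : g ≠ 0) : (trigPoly g a).coeff (2 * g) = a g := by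
  rw [coeff_trigPoly, if_neg (by omega), mul_zero, zero_add,
    Finset.sum_eq_single_of_mem g (by simp; omega)]
  · rw [if_pos (by omega), if_neg (by omega)]
    ring
  · intro n hn hng
    rw [Finset.mem_Icc] at hn
    rw [if_neg (by omega), if_neg (by omega)]
    ring

lemma natDegree_trigPoly_le : (trigPoly g a).natDegree ≤ 2 * g := by
  refine natDegree_le_iff_coeff_eq_zero.mpr fun k hk => ?_
  rw [coeff_trigPoly, if_neg (by omega), mul_zero, zero_add]
  refine Finset.sum_eq_zero fun n hn => ?_
  rw [Finset.mem_Icc] at hn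
  rw [if_neg (by omega), if_neg (by omega)]
  ring

lemma natDegree_trigPoly (hg : g ≠ 0) (ha : a g ≠ 0) : (trigPoly g a).natDegree = 2 * g :=
  natDegree_eq_of_le_of_coeff_ne_zero (natDegree_trigPoly_le a)
    (by rwa [coeff_trigPoly_two_mul a hg])

lemma leadingCoeff_trigPoly (hg : g ≠ 0) (ha : a g ≠ 0) : (trigPoly g a).leadingCoeff = a g := by
  rw [leadingCoeff, natDegree_trigPoly a hg ha, coeff_trigPoly_two_mul a hg]

lemma eulerOp_eulerOp_neg_trigPoly (c : ℝ) :
    eulerOp g c (eulerOp g (-c) (trigPoly g a))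
      = trigPoly g fun n => (1 + c ^ 2 * n ^ 2) * a n := by
  simp only [trigPoly, map_add, map_sum, map_smul, eulerOp_eulerOp_neg_X_pow, smul_add, smul_smul]
  congr 1
  · simp
  refine Finset.sum_congr rfl fun n hn => ?_
  rw [Nat.cast_sub (Finset.mem_Icc.mp hn).2, Nat.cast_add]
  congr 2 <;> ring

end trigPoly

theorem RootsOnUnitCircle.trigPoly_mul {g : ℕ} (hg : g ≠ 0) {a : ℕ → ℂ} (ha : a g ≠ 0)
    (h : RootsOnUnitCircle (trigPoly g a)) {r : ℝ} (hr : 0 ≤ r) :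
    RootsOnUnitCircle (trigPoly g fun n => (1 + r * n ^ 2) * a n) := by
  have hdeg := natDegree_trigPoly a hg ha
  have hc : ((√r : ℝ) : ℂ) ^ 2 = r := by rw [← ofReal_pow, Real.sq_sqrt hr]
  rw [← hc, ← eulerOp_eulerOp_neg_trigPoly]
  exact (h.eulerOp hg hdeg _).eulerOp hg (by rw [natDegree_eulerOp, hdeg]) _

theorem RootsOnUnitCircle.trigPoly_pow_mul {g : ℕ} (hg : g ≠ 0) {a : ℕ → ℂ} (ha : a g ≠ 0)
    (h : RootsOnUnitCircle (trigPoly g a)) {r : ℝ} (hr : 0 ≤ r) (N : ℕ) :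
    RootsOnUnitCircle (trigPoly g fun n => (1 + r * n ^ 2) ^ N * a n) := by
  induction N with
  | zero => simpa using h
  | succ N ih =>
    have hN : (1 + r * g ^ 2 : ℂ) ^ N * a g ≠ 0 := by
      refine mul_ne_zero (pow_ne_zero _ ?_) ha
      exact_mod_cast (by positivity : (1 + r * g ^ 2 : ℝ) ≠ 0)
    convert ih.trigPoly_mul hg hN hr using 3 with n
    ring

lemma norm_leadingCoeff_mul_pow_le_norm_eval {P : ℂ[X]} {w : ℂ} {δ : ℝ} (hδ : 0 ≤ δ)
    (h : ∀ ρ ∈ P.roots, δ ≤ ‖w - ρ‖) : ‖P.leadingCoeff‖ * δ ^ P.natDegree ≤ ‖P.eval w‖ := by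
  rw [(IsAlgClosed.splits P).eval_eq_prod_roots, norm_mul, ← IsAlgClosed.card_roots_eq_natDegree,
    ← Multiset.prod_replicate, ← Multiset.map_const']
  gcongr
  calc (P.roots.map fun _ => δ).prod ≤ (P.roots.map fun ρ => ‖w - ρ‖).prod :=
        Multiset.prod_map_le_prod_map₀ _ _ (fun _ _ => hδ) h
    _ = ‖(P.roots.map fun ρ => w - ρ).prod‖ := by
        simpa [Multiset.map_map, Function.comp_def] using
          (map_multiset_prod (normHom : ℂ →*₀ ℝ) (P.roots.map fun ρ => w - ρ)).symm

theorem RootsOnUnitCircle.norm_eq_one_of_tendsto {P : ℕ → ℂ[X]} (hP : ∀ N, RootsOnUnitCircle (P N))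
    {d : ℕ} (hdeg : ∀ N, (P N).natDegree = d) {b : ℝ} (hb : 0 < b)
    (hlead : ∀ N, b ≤ ‖(P N).leadingCoeff‖) {w : ℂ}
    (hw : Tendsto (fun N => (P N).eval w) atTop (𝓝 0)) : ‖w‖ = 1 := by
  by_contra hw1
  have hδ : 0 < |‖w‖ - 1| := abs_pos.mpr (sub_ne_zero.mpr hw1)
  have hlower : ∀ N, b * |‖w‖ - 1| ^ d ≤ ‖(P N).eval w‖ := fun N => by
    refine le_trans ?_ (norm_leadingCoeff_mul_pow_le_norm_eval hδ.le fun ρ hρ => ?_)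
    · rw [hdeg]
      gcongr
      exact hlead N
    · rw [← hP N ρ (isRoot_of_mem_roots hρ)]
      exact abs_norm_sub_norm_le w ρ
  have hnorm : Tendsto (fun N => ‖(P N).eval w‖) atTop (𝓝 0) := by
    simpa using hw.norm
  obtain ⟨N, hN⟩ := (hnorm.eventually_lt_const (by positivity : 0 < b * |‖w‖ - 1| ^ d)).exists
  exact (hlower N).not_gt hN

lemma tendsto_eval_trigPoly {g : ℕ} {b : ℕ → ℕ → ℂ} {a : ℕ → ℂ}
    (h : ∀ n, Tendsto (fun N => b N n) atTop (𝓝 (a n))) (w : ℂ) :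
    Tendsto (fun N => (trigPoly g (b N)).eval w) atTop (𝓝 ((trigPoly g a).eval w)) := by
  simp only [trigPoly, eval_add, eval_smul, eval_finsetSum, smul_eq_mul]
  exact ((h 0).mul_const _).add (tendsto_finsetSum _ fun n _ => (h n).mul_const _)

noncomputable def xiPoly (g : ℕ) (Φ : ℕ → ℝ) (s : ℝ) : ℂ[X] :=
  trigPoly g fun n => (Φ n : ℂ) * (Real.exp (s * (n : ℝ) ^ 2) : ℂ)

lemma eval_xiPoly_exp (g : ℕ) (Φ : ℕ → ℝ) (s : ℝ) (z : ℂ) :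
    (xiPoly g Φ s).eval (exp (I * z)) = exp (g * I * z) * Xi g Φ s z := by
  simp [xiPoly, eval_trigPoly_exp, Xi]

lemma norm_exp_I_mul (z : ℂ) : ‖exp (I * z)‖ = Real.exp (-z.im) := by
  simp [norm_exp]

theorem rootsOnUnitCircle_xiPoly_iff {g : ℕ} (hg : g ≠ 0) {Φ : ℕ → ℝ} (hΦ : Φ g ≠ 0) (s : ℝ) :
    RootsOnUnitCircle (xiPoly g Φ s) ↔ ∀ z : ℂ, Xi g Φ s z = 0 → z.im = 0 := by
  constructor
  · intro h z hz
    have hw := h (exp (I * z)) (by rw [IsRoot, eval_xiPoly_exp, hz, mul_zero])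
    rwa [norm_exp_I_mul, Real.exp_eq_one_iff, neg_eq_zero] at hw
  · intro h w hw
    have hw0 : w ≠ 0 := by
      rintro rfl
      rw [IsRoot, ← coeff_zero_eq_eval_zero, xiPoly, coeff_trigPoly_zero _ hg] at hw
      simp [hΦ] at hw
    have hz : exp (I * -(I * log w)) = w := by
      rw [mul_neg, ← mul_assoc, I_mul_I, neg_one_mul, neg_neg, exp_log hw0]
    rw [IsRoot, ← hz, eval_xiPoly_exp] at hw
    rw [← hz, norm_exp_I_mul, h _ ((mul_eq_zero.mp hw).resolve_left (exp_ne_zero _)), neg_zero,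
      Real.exp_zero]

theorem RootsOnUnitCircle.xiPoly_of_le {g : ℕ} (hg : g ≠ 0) {Φ : ℕ → ℝ} (hΦ : Φ g ≠ 0) {t t' : ℝ}
    (htt' : t ≤ t') (h : RootsOnUnitCircle (xiPoly g Φ t)) : RootsOnUnitCircle (xiPoly g Φ t') := by
  set a : ℕ → ℂ := fun n => (Φ n : ℂ) * (Real.exp (t * (n : ℝ) ^ 2) : ℂ)
  have ha : a g ≠ 0 := mul_ne_zero (ofReal_ne_zero.mpr hΦ) (ofReal_ne_zero.mpr (Real.exp_ne_zero _))
  set r : ℕ → ℝ := fun N => (t' - t) / N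
  have hr : ∀ N, 0 ≤ r N := fun N => div_nonneg (sub_nonneg.mpr htt') N.cast_nonneg
  have hm : ∀ N (n : ℕ), 1 ≤ ‖(1 + r N * n ^ 2 : ℂ)‖ := fun N n => by
    rw [show (1 + r N * n ^ 2 : ℂ) = ((1 + r N * n ^ 2 : ℝ) : ℂ) by push_cast; ring, norm_real,
      Real.norm_of_nonneg (by have := hr N; positivity)]
    have := hr N
    nlinarith
  have hmN : ∀ N, (1 + r N * g ^ 2 : ℂ) ^ N * a g ≠ 0 := fun N =>
    mul_ne_zero (pow_ne_zero _ (norm_pos_iff.mp (one_pos.trans_le (hm N g)))) ha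
  intro w hw
  refine RootsOnUnitCircle.norm_eq_one_of_tendsto (fun N => h.trigPoly_pow_mul hg ha (hr N) N)
    (fun N => natDegree_trigPoly _ hg (hmN N)) (norm_pos_iff.mpr ha) (fun N => ?_) ?_
  · rw [leadingCoeff_trigPoly _ hg (hmN N), norm_mul _ (a g), norm_pow]
    exact le_mul_of_one_le_left (norm_nonneg _) (one_le_pow₀ (hm N g))
  · rw [← hw.eq_zero]
    refine tendsto_eval_trigPoly (fun n => ?_) w
    convert (tendsto_one_add_div_pow_exp ((t' - t) * n ^ 2)).mul_const (a n) using 2 with N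
    · simp only [r]
      push_cast
      ring
    · simp only [a]
      push_cast
      rw [← mul_assoc, mul_comm (exp _), mul_assoc, ← exp_add, ← add_mul, sub_add_cancel]

lemma Xi_eq_of_forall_gt {g μ : ℕ} (hμg : μ ≤ g) {Φ : ℕ → ℝ}
    (hΦ : ∀ n, μ < n → n ≤ g → Φ n = 0) : Xi g Φ = Xi μ Φ := by
  funext s z
  rw [Xi, Xi, ← Finset.sum_subset (Finset.Icc_subset_Icc_right hμg)]
  intro n hn hnμ
  rw [Finset.mem_Icc] at hn hnμ
  rw [hΦ n (by omega) hn.2, ofReal_zero, zero_mul, zero_mul]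

lemma Xi_zero (Φ : ℕ → ℝ) (s : ℝ) (z : ℂ) : Xi 0 Φ s z = Φ 0 := by
  simp [Xi]

theorem zeros_stay_real_general (g : ℕ) (Φ : ℕ → ℝ) (t : ℝ)
    (h : ∀ z : ℂ, Xi g Φ t z = 0 → z.im = 0) :
    ∀ t' : ℝ, t < t' → ∀ z : ℂ, Xi g Φ t' z = 0 → z.im = 0 := by
  intro t' htt'
  set μ := Nat.findGreatest (fun n => Φ n ≠ 0) g
  have hXi : Xi g Φ = Xi μ Φ := Xi_eq_of_forall_gt (Nat.findGreatest_le g) fun n hμn hng =>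
    not_not.mp (Nat.findGreatest_is_greatest hμn hng)
  rw [hXi] at h ⊢
  rcases eq_or_ne μ 0 with hμ | hμ
  · intro z hz
    have hΦ0 : (Φ 0 : ℂ) = 0 := by rwa [hμ, Xi_zero] at hz
    simpa using h I (by rw [hμ, Xi_zero, hΦ0])
  · have hΦ : Φ μ ≠ 0 := Nat.findGreatest_of_ne_zero rfl hμ
    exact (rootsOnUnitCircle_xiPoly_iff hμ hΦ t').mp
      (((rootsOnUnitCircle_xiPoly_iff hμ hΦ t).mpr h).xiPoly_of_le hμ hΦ htt'.le)

/-- If for some `t` every complex zero of `Ξ_t` is real, then the same holds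
for every `t' > t`. -/
theorem zeros_stay_real (g : ℕ) (hg : 1 ≤ g) (Φ : ℕ → ℝ) (t : ℝ)
    (h : ∀ z : ℂ, Xi g Φ t z = 0 → z.im = 0) :
    ∀ t' : ℝ, t < t' → ∀ z : ℂ, Xi g Φ t' z = 0 → z.im = 0 :=
  zeros_stay_real_general g Φ t h
end

section
/- For every integer m with 0 ≤ m ≤ 2g, the integer c_m = Σ_{f monic, deg f = m} χ_D(f) is odd; in particular c_m ≠ 0 for all 0 ≤ m ≤ 2g, so all the Fourier coefficients Φ_n = c_{g−n} q^{n/2} (0 ≤ n ≤ g) of the completed L-function are nonzero. -/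
open Polynomial
open scoped Classical

/-- The quadratic character `χ_D` modulo an irreducible `D`: the quadratic character of the
residue field `F[T]/(D)` applied to `f mod D`. -/
noncomputable def chiD (F : Type*) [Field F] [Fintype F] [DecidableEq F]
    (D : Polynomial F) (f : Polynomial F) : ℤ :=
  quadraticCharFun (Polynomial F ⧸ Ideal.span {D}) (Ideal.Quotient.mk (Ideal.span {D}) f)

/-- `c_n = ∑_{f monic, deg f = n} χ_D(f)`. -/
noncomputable def cD (F : Type*) [Field F] [Fintype F] [DecidableEq F]
    (D : Polynomial F) (n : ℕ) : ℤ :=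
  ∑ᶠ (f : Polynomial F) (_ : f.Monic ∧ f.natDegree = n), chiD F D f

/-- The subtype of monic polynomials of degree `m` over a finite field is a fintype. -/
noncomputable instance monicFintype (F : Type*) [Field F] [Fintype F] [DecidableEq F] (m : ℕ) :
    Fintype { p : Polynomial F // p.Monic ∧ p.natDegree = m } :=
  Fintype.ofEquiv (Fin m → F)
    (((monicEquivDegreeLT m).trans (degreeLTEquiv F m).toEquiv).symm)

theorem monic_card (F : Type*) [Field F] [Fintype F] [DecidableEq F] (m : ℕ) :
    Fintype.card { p : Polynomial F // p.Monic ∧ p.natDegree = m } = Fintype.card F ^ m := by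
  rw [Fintype.card_congr ((monicEquivDegreeLT m).trans (degreeLTEquiv F m).toEquiv)]
  simp [Fintype.card_fun]

theorem chiD_ne_zero (F : Type*) [Field F] [Fintype F] [DecidableEq F]
    (D : Polynomial F) (f : Polynomial F) (hf : f.Monic) (hlt : f.natDegree < D.natDegree) :
    chiD F D f = 1 ∨ chiD F D f = -1 := by
  have hfne : f ≠ 0 := hf.ne_zero
  have hndvd : ¬ D ∣ f := by
    intro hdvd
    exact absurd (Polynomial.natDegree_le_of_dvd hdvd hfne) (not_le.mpr hlt)
  have hmk : (Ideal.Quotient.mk (Ideal.span {D}) f) ≠ 0 := by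
    rw [Ne, Ideal.Quotient.eq_zero_iff_mem, Ideal.mem_span_singleton]
    exact hndvd
  unfold chiD quadraticCharFun
  rw [if_neg hmk]
  split_ifs
  · exact Or.inl rfl
  · exact Or.inr rfl

theorem cD_odd (F : Type*) [Field F] [Fintype F] [DecidableEq F]
    (hq : Odd (Fintype.card F))
    (D : Polynomial F) (m : ℕ) (hm : m < D.natDegree) : Odd (cD F D m) := by
  classical
  set S : Set (Polynomial F) := {f | f.Monic ∧ f.natDegree = m} with hS
  have : Fintype S := monicFintype F m
  have hsum : cD F D m = ∑ f ∈ S.toFinset, chiD F D f := by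
    refine finsum_cond_eq_sum_of_cond_iff _ ?_
    intro f _
    simp [hS]
  rw [← Int.not_even_iff_odd, even_iff_two_dvd]
  intro hdvd
  have hcast : ((cD F D m : ℤ) : ZMod 2) = 0 := by
    exact_mod_cast (ZMod.intCast_zmod_eq_zero_iff_dvd _ 2).mpr hdvd
  rw [hsum, Int.cast_sum] at hcast
  have hone : ∀ f ∈ S.toFinset, ((chiD F D f : ℤ) : ZMod 2) = 1 := by
    intro f hfmem
    rw [Set.mem_toFinset] at hfmem
    rcases chiD_ne_zero F D f hfmem.1 (hfmem.2 ▸ hm) with h | h <;> rw [h] <;> decide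
  rw [Finset.sum_congr rfl hone, Finset.sum_const, nsmul_eq_mul, mul_one] at hcast
  have hcard : S.toFinset.card = Fintype.card F ^ m := by
    rw [Set.toFinset_card, ← monic_card F m]
    exact Fintype.card_congr' rfl
  rw [hcard] at hcast
  have : (2 : ℕ) ∣ Fintype.card F ^ m := by
    exact_mod_cast (ZMod.natCast_eq_zero_iff _ 2).mp hcast
  exact absurd this (by simpa [← Nat.not_even_iff_odd, even_iff_two_dvd] using hq.pow)

/-- For `D` monic irreducible of odd degree `2g+1` over a finite field of odd cardinality,
the coefficients `c_m` are odd for `0 ≤ m ≤ 2g`; in particular every Fourier coefficient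
`Φ_n = c_{g-n} q^{n/2}` of the completed `L`-function is nonzero. -/
theorem cD_odd_of_irreducible (F : Type*) [Field F] [Fintype F] [DecidableEq F]
    (hq : Odd (Fintype.card F)) (g : ℕ) (hg : 1 ≤ g)
    (D : Polynomial F) (hmonic : D.Monic) (hirr : Irreducible D)
    (hdeg : D.natDegree = 2 * g + 1) :
    (∀ m : ℕ, m ≤ 2 * g → Odd (cD F D m)) ∧
      (∀ n : ℕ, n ≤ g →
        (cD F D (g - n) : ℝ) * Real.sqrt (Fintype.card F) ^ n ≠ 0) := by
  have hodd : ∀ m : ℕ, m ≤ 2 * g → Odd (cD F D m) := fun m hm =>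
    cD_odd F hq D m (by omega)
  refine ⟨hodd, fun n hn => ?_⟩
  have h1 : cD F D (g - n) ≠ 0 := by
    intro h
    have := hodd (g - n) (by omega)
    rw [h] at this
    exact ((Int.not_odd_iff_even.mpr) Even.zero) this
  have h2 : Real.sqrt (Fintype.card F) ≠ 0 := by
    have : (0 : ℝ) < Fintype.card F := by
      exact_mod_cast Fintype.card_pos
    positivity
  exact mul_ne_zero (by exact_mod_cast h1) (pow_ne_zero _ h2)
end

section
/- If at least two of the coefficients Φ_0, Φ_1, …, Φ_g are nonzero, then there exist t ∈ ℝ and z ∈ ℂ with Im z ≠ 0 such that Ξ_t(z) = 0. -/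
/-!
Substituting `w = e^{iz}`, the function `w^m Ξ_t(z)` is a palindromic polynomial `P_t` of degree
`2m`, where `m` is the largest index with `Φ_m ≠ 0`; real zeros of `Ξ_t` are roots of `P_t` on the
unit circle. If all roots of `P_t` lay in the closed unit disc, the Mahler measure of `P_t` would be
`|Φ_m| e^{tm²}`, and Mignotte's bound would give `|Φ_k| e^{tk²} ≤ C(2m, m+k) |Φ_m| e^{tm²}` for a
second index `k < m` with `Φ_k ≠ 0`. This fails once `t` is negative enough, so some root has
`|w| > 1`, and `z = -i log w` is a non-real zero.
-/

open Complex

open Polynomial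

noncomputable def cosPoly {R : Type*} [Semiring R] (g : ℕ) (a : ℕ → R) : R[X] :=
  C (a 0) * X ^ g + ∑ n ∈ Finset.Icc 1 g, C (a n) * (X ^ (g + n) + X ^ (g - n))

section
variable {R : Type*} [Semiring R] (g : ℕ) (a : ℕ → R)

theorem coeff_cosPoly_add {k : ℕ} (hk : k ≤ g) : (cosPoly g a).coeff (g + k) = a k := by
  simp only [cosPoly, coeff_add, finsetSum_coeff, coeff_C_mul, coeff_X_pow, mul_add]
  rcases Nat.eq_zero_or_pos k with rfl | hk0
  · rw [Finset.sum_eq_zero fun n hn => ?_]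
    · simp
    have := Finset.mem_Icc.mp hn
    rw [if_neg (by omega), if_neg (by omega), mul_zero, add_zero]
  · rw [Finset.sum_eq_single_of_mem k (by simp; omega) fun n hn hnk => ?_]
    · rw [if_neg (by omega), if_pos rfl, if_neg (by omega)]
      simp
    have := Finset.mem_Icc.mp hn
    rw [if_neg (by omega), if_neg (by omega), mul_zero, add_zero]

theorem natDegree_cosPoly_le : (cosPoly g a).natDegree ≤ 2 * g := by
  unfold cosPoly
  refine natDegree_add_le_of_degree_le ((natDegree_C_mul_X_pow_le _ _).trans (by omega))
    (natDegree_sum_le_of_forall_le _ _ fun n hn => ?_)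
  simp only [Finset.mem_Icc] at hn
  refine (natDegree_C_mul_le _ _).trans (natDegree_add_le_of_degree_le ?_ ?_) <;>
    exact (natDegree_X_pow_le _).trans (by omega)

theorem natDegree_cosPoly (h : a g ≠ 0) : (cosPoly g a).natDegree = 2 * g :=
  natDegree_eq_of_le_of_coeff_ne_zero (natDegree_cosPoly_le g a)
    (by rwa [two_mul, coeff_cosPoly_add g a le_rfl])

theorem leadingCoeff_cosPoly (h : a g ≠ 0) : (cosPoly g a).leadingCoeff = a g := by
  rw [leadingCoeff, natDegree_cosPoly g a h, two_mul, coeff_cosPoly_add g a le_rfl]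

end

theorem eval_cosPoly {K : Type*} [Field K] (g : ℕ) (a : ℕ → K) {w : K} (hw : w ≠ 0) :
    (cosPoly g a).eval w = w ^ g * (a 0 + ∑ n ∈ Finset.Icc 1 g, a n * (w ^ n + w⁻¹ ^ n)) := by
  simp only [cosPoly, eval_add, eval_mul, eval_C, eval_pow, eval_X, eval_finsetSum, mul_add,
    Finset.mul_sum]
  congr 1
  · ring
  refine Finset.sum_congr rfl fun n hn => ?_
  rw [pow_add, pow_sub₀ w hw (Finset.mem_Icc.mp hn).2, inv_pow]
  ring

theorem norm_coeff_le_choose_mul_norm_leadingCoeff {p : ℂ[X]} (h : ∀ w ∈ p.roots, ‖w‖ ≤ 1)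
    (n : ℕ) : ‖p.coeff n‖ ≤ p.natDegree.choose n * ‖p.leadingCoeff‖ := by
  have hM : p.mahlerMeasure = ‖p.leadingCoeff‖ := by
    rw [mahlerMeasure_eq_leadingCoeff_mul_prod_roots, Multiset.prod_eq_one, mul_one]
    simp only [Multiset.mem_map]
    rintro _ ⟨w, hw, rfl⟩
    exact max_eq_left (h w hw)
  exact hM ▸ p.norm_coeff_le_choose_mul_mahlerMeasure n

theorem Real.exists_mul_exp_lt_mul_exp (a : ℝ) {b μ ν : ℝ} (hb : 0 < b) (h : ν < μ) :
    ∃ t, a * Real.exp (t * μ) < b * Real.exp (t * ν) := by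
  have hlim : Filter.Tendsto (fun t => b * Real.exp (t * (ν - μ))) Filter.atBot Filter.atTop :=
    (Real.tendsto_exp_atTop.comp
      (Filter.tendsto_id.atBot_mul_const_of_neg (sub_neg.mpr h))).const_mul_atTop hb
  obtain ⟨t, ht⟩ := (hlim.eventually_gt_atTop a).exists
  refine ⟨t, ?_⟩
  calc a * Real.exp (t * μ) < b * Real.exp (t * (ν - μ)) * Real.exp (t * μ) :=
        mul_lt_mul_of_pos_right ht (Real.exp_pos _)
    _ = b * Real.exp (t * ν) := by rw [mul_assoc, ← Real.exp_add]; ring_nf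

noncomputable def xiCoeff (Φ : ℕ → ℝ) (t : ℝ) (n : ℕ) : ℂ :=
  (Φ n : ℂ) * (Real.exp (t * (n : ℝ) ^ 2) : ℂ)

theorem norm_xiCoeff (Φ : ℕ → ℝ) (t : ℝ) (n : ℕ) :
    ‖xiCoeff Φ t n‖ = |Φ n| * Real.exp (t * (n : ℝ) ^ 2) := by
  rw [xiCoeff, norm_mul, norm_real, norm_real, Real.norm_eq_abs,
    Real.norm_of_nonneg (Real.exp_pos _).le]

theorem xiCoeff_ne_zero {Φ : ℕ → ℝ} {n : ℕ} (h : Φ n ≠ 0) (t : ℝ) : xiCoeff Φ t n ≠ 0 := by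
  simp [xiCoeff, h]

theorem eval_cosPoly_xiCoeff (g : ℕ) (Φ : ℕ → ℝ) (t : ℝ) (z : ℂ) :
    (cosPoly g (xiCoeff Φ t)).eval (exp (I * z)) = exp (I * z) ^ g * Xi g Φ t z := by
  rw [eval_cosPoly g _ (exp_ne_zero _), Xi]
  congr 2
  · simp [xiCoeff]
  refine Finset.sum_congr rfl fun n _ => ?_
  rw [xiCoeff, ← exp_neg, ← exp_nat_mul, ← exp_nat_mul]
  ring_nf

theorem Xi_eq_of_forall_eq_zero {m g : ℕ} (hmg : m ≤ g) {Φ : ℕ → ℝ}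
    (h : ∀ n, m < n → n ≤ g → Φ n = 0) : Xi g Φ = Xi m Φ := by
  funext t z
  rw [Xi, Xi, Finset.sum_subset (Finset.Icc_subset_Icc_right hmg) fun n hn hnm => ?_]
  simp only [Finset.mem_Icc] at hn hnm
  simp [h n (by omega) hn.2]

theorem exists_nonreal_zero_of_mem_roots {g : ℕ} {Φ : ℕ → ℝ} {t : ℝ} {w : ℂ}
    (hw : w ∈ (cosPoly g (xiCoeff Φ t)).roots) (hw1 : 1 < ‖w‖) :
    ∃ z : ℂ, z.im ≠ 0 ∧ Xi g Φ t z = 0 := by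
  have hw0 : w ≠ 0 := norm_pos_iff.mp (one_pos.trans hw1)
  refine ⟨-I * log w, ?_, ?_⟩
  · simpa [Complex.log_re] using (Real.log_pos hw1).ne'
  · have hexp : exp (I * (-I * log w)) = w := by
      rw [← mul_assoc, mul_neg, I_mul_I, neg_neg, one_mul, exp_log hw0]
    have := (mem_roots'.mp hw).2
    rw [IsRoot, ← hexp, eval_cosPoly_xiCoeff, hexp] at this
    exact (mul_eq_zero.mp this).resolve_left (pow_ne_zero _ hw0)

theorem exists_nonreal_zero_of_top_ne_zero {g k : ℕ} (hkg : k < g) {Φ : ℕ → ℝ}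
    (hΦg : Φ g ≠ 0) (hΦk : Φ k ≠ 0) : ∃ (t : ℝ) (z : ℂ), z.im ≠ 0 ∧ Xi g Φ t z = 0 := by
  obtain ⟨t, ht⟩ := Real.exists_mul_exp_lt_mul_exp ((2 * g).choose (g + k) * |Φ g|)
    (abs_pos.mpr hΦk) (show (k : ℝ) ^ 2 < (g : ℝ) ^ 2 by gcongr)
  set P := cosPoly g (xiCoeff Φ t)
  have hlead := leadingCoeff_cosPoly g _ (xiCoeff_ne_zero hΦg t)
  obtain ⟨w, hw, hw1⟩ : ∃ w ∈ P.roots, 1 < ‖w‖ := by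
    by_contra! hroots
    have := norm_coeff_le_choose_mul_norm_leadingCoeff hroots (g + k)
    rw [coeff_cosPoly_add g _ hkg.le, hlead, natDegree_cosPoly g _ (xiCoeff_ne_zero hΦg t),
      norm_xiCoeff, norm_xiCoeff] at this
    linarith
  exact ⟨t, exists_nonreal_zero_of_mem_roots hw hw1⟩

theorem exists_nonreal_zero_of_two_nonzero_coeffs_general (g : ℕ) (Φ : ℕ → ℝ)
    (h : ∃ i j : ℕ, i ≤ g ∧ j ≤ g ∧ i ≠ j ∧ Φ i ≠ 0 ∧ Φ j ≠ 0) :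
    ∃ (t : ℝ) (z : ℂ), z.im ≠ 0 ∧ Xi g Φ t z = 0 := by
  obtain ⟨i, j, hig, hjg, hij, hΦi, hΦj⟩ := h
  set m := Nat.findGreatest (fun n => Φ n ≠ 0) g
  have hΦmax : Φ (max i j) ≠ 0 := by rcases max_choice i j with h | h <;> rwa [h]
  have hΦmin : Φ (min i j) ≠ 0 := by rcases min_choice i j with h | h <;> rwa [h]
  have hmax : max i j ≤ m := Nat.le_findGreatest (max_le hig hjg) hΦmax
  have hΦm : Φ m ≠ 0 := Nat.findGreatest_spec (P := fun n => Φ n ≠ 0) (max_le hig hjg) hΦmax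
  rw [Xi_eq_of_forall_eq_zero (Nat.findGreatest_le g)
    fun n hmn hng => not_not.mp (Nat.findGreatest_is_greatest hmn hng)]
  exact exists_nonreal_zero_of_top_ne_zero ((min_lt_max.mpr hij).trans_le hmax) hΦm hΦmin

/-- If at least two of the coefficients `Φ₀, …, Φ_g` are nonzero, then some deformation
`Ξ_t` has a non-real zero. -/
theorem exists_nonreal_zero_of_two_nonzero_coeffs (g : ℕ) (hg : 1 ≤ g) (Φ : ℕ → ℝ)
    (h : ∃ i j : ℕ, i ≤ g ∧ j ≤ g ∧ i ≠ j ∧ Φ i ≠ 0 ∧ Φ j ≠ 0) :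
    ∃ (t : ℝ) (z : ℂ), z.im ≠ 0 ∧ Xi g Φ t z = 0 :=
  exists_nonreal_zero_of_two_nonzero_coeffs_general g Φ h
end

section
/- Suppose Φ_g ≠ 0, every complex zero of Ξ_0 is real, and every zero of Ξ_0 is simple (i.e., the derivative Ξ_0' is nonzero at each zero of Ξ_0). Then there exists t < 0 such that every complex zero of Ξ_t is real. (In the L-function setting this says that if Ξ_0(·, χ_D) has only simple zeros then the De Bruijn–Newman constant Λ_D is strictly negative.) -/
open Complex

/-!
Zeros of `Ξ_t` are `2π`-periodic and closed under conjugation, and for `t ∈ [-1, 0]` the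
leading term `Φ_g e^{tg²} e^{-igz}` dominates when `|Im z|` is large, so every zero of `Ξ_t` is
a translate of one in a fixed compact box `K`. Near a point `(0, a)` with `a ∈ K` either `Ξ` does
not vanish, or `a` is a simple real zero of `Ξ_0`; in the latter case `Ξ_t` is injective on a
fixed disc around `a` for all `t` near `0`, and since that disc is conjugation invariant, a zero
`z` in it coincides with its conjugate zero `z̄`. Compactness of `K` makes the neighbourhood of
`t = 0` uniform.
-/

open Filter Topology Set Real ComplexConjugate

section LocalInjectivity

variable {𝕜 F : Type*} [RCLike 𝕜] [NormedAddCommGroup F] [NormedSpace 𝕜 F]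

theorem Convex.injOn_of_norm_hasDerivWithinAt_sub_le {s : Set 𝕜} (hs : Convex ℝ s)
    {f f' : 𝕜 → F} (hf : ∀ z ∈ s, HasDerivWithinAt f (f' z) s z) {c : F} {C : ℝ}
    (hC : C < ‖c‖) (hbound : ∀ z ∈ s, ‖f' z - c‖ ≤ C) : InjOn f s := by
  intro x hx y hy hxy
  have hlin : ∀ z ∈ s, HasDerivWithinAt (fun z => f z - z • c) (f' z - c) s z := fun z hz =>
    by simpa using (hf z hz).fun_sub ((hasDerivWithinAt_id z s).smul_const c)
  have hmvt := norm_image_sub_le_of_norm_hasDerivWithin_le hlin hbound hs hx hy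
  rw [hxy, sub_sub_sub_cancel_left, ← sub_smul, norm_smul, norm_sub_rev] at hmvt
  by_contra hne
  have hpos : 0 < ‖y - x‖ := norm_pos_iff.2 (sub_ne_zero.2 (Ne.symm hne))
  nlinarith

theorem exists_eventually_injOn_ball {P : Type*} [TopologicalSpace P] {f f' : P → 𝕜 → F}
    {p₀ : P} {a : 𝕜} (hf : ∀ p z, HasDerivAt (f p) (f' p z) z)
    (hf' : ContinuousAt (Function.uncurry f') (p₀, a)) (ha : f' p₀ a ≠ 0) :
    ∃ δ > 0, ∀ᶠ p in 𝓝 p₀, InjOn (f p) (Metric.ball a δ) := by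
  have hc : 0 < ‖f' p₀ a‖ / 2 := half_pos (norm_pos_iff.2 ha)
  obtain ⟨U, hU, V, hV, hUV⟩ :=
    mem_nhds_prod_iff.1 (hf'.preimage_mem_nhds (Metric.ball_mem_nhds _ hc))
  obtain ⟨δ, hδ, hδV⟩ := Metric.mem_nhds_iff.1 hV
  refine ⟨δ, hδ, eventually_of_mem hU fun p hp => ?_⟩
  refine (convex_ball a δ).injOn_of_norm_hasDerivWithinAt_sub_le
    (fun z _ => (hf p z).hasDerivWithinAt) (half_lt_self (norm_pos_iff.2 ha)) fun z hz => ?_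
  exact (mem_ball_iff_norm.1 (hUV (mk_mem_prod hp (hδV hz)))).le

end LocalInjectivity

theorem eventually_im_eq_zero_near_real_simple_zero {P : Type*} [TopologicalSpace P]
    {f f' : P → ℂ → ℂ} {p₀ : P} {a : ℂ} (hconj : ∀ p z, f p (conj z) = conj (f p z))
    (hf : ∀ p z, HasDerivAt (f p) (f' p z) z)
    (hf' : ContinuousAt (Function.uncurry f') (p₀, a)) (ha : a.im = 0) (hsimple : f' p₀ a ≠ 0) :
    ∀ᶠ q : P × ℂ in 𝓝 (p₀, a), f q.1 q.2 = 0 → q.2.im = 0 := by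
  obtain ⟨δ, hδ, hinj⟩ := exists_eventually_injOn_ball hf hf' hsimple
  filter_upwards [hinj.prod_nhds (Metric.ball_mem_nhds a hδ)] with ⟨p, z⟩ ⟨hp, hz⟩ hzero
  have hz' : conj z ∈ Metric.ball a δ := by
    rwa [Metric.mem_ball, ← conj_eq_iff_im.2 ha, dist_conj_conj]
  exact conj_eq_iff_im.1 (hp hz' hz (by rw [hconj, hzero, map_zero]))

section Xi

variable (g : ℕ) (Φ : ℕ → ℝ)

noncomputable def XiDeriv (t : ℝ) (z : ℂ) : ℂ :=
  ∑ n ∈ Finset.Icc 1 g, (Φ n : ℂ) * (Real.exp (t * (n : ℝ) ^ 2) : ℂ) *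
    ((n : ℂ) * I * (Complex.exp ((n : ℂ) * I * z) - Complex.exp (-((n : ℂ) * I * z))))

theorem hasDerivAt_Xi (t : ℝ) (z : ℂ) : HasDerivAt (Xi g Φ t) (XiDeriv g Φ t z) z := by
  refine (HasDerivAt.fun_sum fun n _ => ?_).const_add _
  have hlin : HasDerivAt (fun z : ℂ => (n : ℂ) * I * z) ((n : ℂ) * I) z := by
    simpa using (hasDerivAt_id z).const_mul ((n : ℂ) * I)
  refine ((hlin.cexp.add hlin.fun_neg.cexp).const_mul
    ((Φ n : ℂ) * (Real.exp (t * (n : ℝ) ^ 2) : ℂ))).congr_deriv ?_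
  ring

theorem continuous_uncurry_Xi : Continuous (Function.uncurry (Xi g Φ)) := by
  unfold Xi Function.uncurry; fun_prop

theorem continuous_uncurry_XiDeriv : Continuous (Function.uncurry (XiDeriv g Φ)) := by
  unfold XiDeriv Function.uncurry; fun_prop

theorem Xi_conj (t : ℝ) (z : ℂ) : Xi g Φ t (conj z) = conj (Xi g Φ t z) := by
  simp only [Xi, map_add, map_sum, map_mul, conj_ofReal, ← Complex.exp_conj, map_neg, conj_I,
    conj_natCast]
  congr 1
  refine Finset.sum_congr rfl fun n _ => ?_
  ring_nf

theorem periodic_Xi (t : ℝ) : Function.Periodic (Xi g Φ t) (2 * π) := by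
  intro z
  simp only [Xi]
  congr 1
  refine Finset.sum_congr rfl fun n _ => ?_
  have hshift : (n : ℂ) * I * (z + 2 * π) = (n : ℂ) * I * z + n * (2 * π * I) := by ring
  rw [hshift, (Complex.exp_periodic.nat_mul n) _, neg_add, ← sub_eq_add_neg,
    (Complex.exp_periodic.nat_mul n).sub_eq]

theorem exists_re_mem_Ico_Xi_eq (t : ℝ) (z : ℂ) :
    ∃ w : ℂ, w.re ∈ Ico 0 (2 * π) ∧ w.im = z.im ∧ Xi g Φ t w = Xi g Φ t z := by
  have hper : Function.Periodic (fun x : ℝ => Xi g Φ t (x + z.im * I)) (2 * π) := fun x => by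
    simpa [add_right_comm] using periodic_Xi g Φ t (x + z.im * I)
  obtain ⟨x, hx, hxz⟩ := hper.exists_mem_Ico₀ Real.two_pi_pos z.re
  exact ⟨x + z.im * I, by simpa using hx, by simp, by simpa [re_add_im] using hxz.symm⟩

end Xi

section ImaginaryBound

theorem norm_cexp_neg_natCast_mul_I_mul (n : ℕ) (z : ℂ) :
    ‖Complex.exp (-((n : ℂ) * I * z))‖ = Real.exp z.im ^ n := by
  rw [Complex.norm_exp, ← Real.exp_nat_mul]
  simp

variable (Φ : ℕ → ℝ)

theorem norm_Xi_succ_sub_leading_le (m : ℕ) {t : ℝ} (ht : t ≤ 0) {z : ℂ} (hz : 0 ≤ z.im) :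
    ‖Xi (m + 1) Φ t z - (Φ (m + 1) : ℂ) * (Real.exp (t * ((m + 1 : ℕ) : ℝ) ^ 2) : ℂ) *
        Complex.exp (-(((m + 1 : ℕ) : ℂ) * I * z))‖ ≤
      (|Φ 0| + ∑ n ∈ Finset.Icc 1 m, 2 * |Φ n| + |Φ (m + 1)|) * Real.exp z.im ^ m := by
  set u := Real.exp z.im
  have hu : 1 ≤ u := Real.one_le_exp hz
  have hum : 1 ≤ u ^ m := one_le_pow₀ hu
  have hdecay (n : ℕ) : ‖Complex.exp ((n : ℂ) * I * z)‖ ≤ 1 := by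
    rw [Complex.norm_exp, Real.exp_le_one_iff]
    simpa using mul_nonneg n.cast_nonneg hz
  have hweight (n : ℕ) : ‖(Φ n : ℂ) * (Real.exp (t * (n : ℝ) ^ 2) : ℂ)‖ ≤ |Φ n| := by
    rw [norm_mul, norm_real, norm_real, Real.norm_eq_abs, Real.norm_of_nonneg (Real.exp_nonneg _)]
    exact mul_le_of_le_one_right (abs_nonneg _)
      (Real.exp_le_one_iff.2 (mul_nonpos_of_nonpos_of_nonneg ht (sq_nonneg _)))
  have hterm : ∀ n ∈ Finset.Icc 1 m, ‖(Φ n : ℂ) * (Real.exp (t * (n : ℝ) ^ 2) : ℂ) *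
      (Complex.exp ((n : ℂ) * I * z) + Complex.exp (-((n : ℂ) * I * z)))‖ ≤ 2 * |Φ n| * u ^ m := by
    intro n hn
    have hnm : u ^ n ≤ u ^ m := pow_le_pow_right₀ hu (Finset.mem_Icc.1 hn).2
    rw [norm_mul]
    have hsum : ‖Complex.exp ((n : ℂ) * I * z) + Complex.exp (-((n : ℂ) * I * z))‖ ≤ 1 + u ^ m :=
      (norm_add_le _ _).trans (by linarith [hdecay n, norm_cexp_neg_natCast_mul_I_mul n z])
    calc _ ≤ |Φ n| * (1 + u ^ m) := mul_le_mul (hweight n) hsum (norm_nonneg _) (abs_nonneg _)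
      _ ≤ 2 * |Φ n| * u ^ m := by nlinarith [abs_nonneg (Φ n)]
  have hsplit : Xi (m + 1) Φ t z - (Φ (m + 1) : ℂ) * (Real.exp (t * ((m + 1 : ℕ) : ℝ) ^ 2) : ℂ) *
        Complex.exp (-(((m + 1 : ℕ) : ℂ) * I * z)) =
      (Φ 0 : ℂ) + ∑ n ∈ Finset.Icc 1 m, (Φ n : ℂ) * (Real.exp (t * (n : ℝ) ^ 2) : ℂ) *
          (Complex.exp ((n : ℂ) * I * z) + Complex.exp (-((n : ℂ) * I * z))) +
        (Φ (m + 1) : ℂ) * (Real.exp (t * ((m + 1 : ℕ) : ℝ) ^ 2) : ℂ) *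
          Complex.exp (((m + 1 : ℕ) : ℂ) * I * z) := by
    rw [Xi, Finset.sum_Icc_succ_top (by omega)]
    ring
  rw [hsplit]
  refine (norm_add₃_le).trans ?_
  have hΦ0 : ‖(Φ 0 : ℂ)‖ ≤ |Φ 0| * u ^ m := by
    rw [norm_real, Real.norm_eq_abs]; exact le_mul_of_one_le_right (abs_nonneg _) hum
  have hsum := (norm_sum_le _ _).trans (Finset.sum_le_sum hterm)
  have hlast : ‖(Φ (m + 1) : ℂ) * (Real.exp (t * ((m + 1 : ℕ) : ℝ) ^ 2) : ℂ) *
      Complex.exp (((m + 1 : ℕ) : ℂ) * I * z)‖ ≤ |Φ (m + 1)| * u ^ m := by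
    rw [norm_mul]
    exact mul_le_mul (hweight _) ((hdecay _).trans hum) (norm_nonneg _) (abs_nonneg _)
  rw [← Finset.sum_mul] at hsum
  linarith [add_mul (|Φ 0| + ∑ n ∈ Finset.Icc 1 m, 2 * |Φ n|) |Φ (m + 1)| (u ^ m),
    add_mul |Φ 0| (∑ n ∈ Finset.Icc 1 m, 2 * |Φ n|) (u ^ m)]

theorem exists_im_le_of_Xi_eq_zero {g : ℕ} (hg : 1 ≤ g) (hΦ : Φ g ≠ 0) :
    ∃ Y : ℝ, ∀ t ∈ Icc (-1 : ℝ) 0, ∀ z : ℂ, Xi g Φ t z = 0 → z.im ≤ Y := by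
  obtain ⟨m, rfl⟩ : ∃ m, g = m + 1 := ⟨g - 1, by omega⟩
  set B := |Φ 0| + ∑ n ∈ Finset.Icc 1 m, 2 * |Φ n| + |Φ (m + 1)|
  have hΦpos : 0 < |Φ (m + 1)| := abs_pos.2 hΦ
  refine ⟨B * Real.exp (((m + 1 : ℕ) : ℝ) ^ 2) / |Φ (m + 1)|, fun t ht z hz => ?_⟩
  rcases lt_or_ge z.im 0 with hneg | hnonneg
  · exact hneg.le.trans (by positivity)
  set u := Real.exp z.im
  have hlead : |Φ (m + 1)| * Real.exp (-((m + 1 : ℕ) : ℝ) ^ 2) * u ^ (m + 1) ≤ B * u ^ m := by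
    have hbound := norm_Xi_succ_sub_leading_le Φ m ht.2 hnonneg
    rw [hz, zero_sub, norm_neg, norm_mul, norm_mul, norm_real, norm_real, Real.norm_eq_abs,
      Real.norm_of_nonneg (Real.exp_nonneg _), norm_cexp_neg_natCast_mul_I_mul] at hbound
    refine le_trans (mul_le_mul_of_nonneg_right (mul_le_mul_of_nonneg_left ?_ hΦpos.le)
      (by positivity)) hbound
    exact Real.exp_le_exp.2 (by nlinarith [ht.1, sq_nonneg ((m + 1 : ℕ) : ℝ)])
  have hu : |Φ (m + 1)| * Real.exp (-((m + 1 : ℕ) : ℝ) ^ 2) * u ≤ B := by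
    rw [pow_succ u m, ← mul_assoc, mul_right_comm _ (u ^ m)] at hlead
    exact le_of_mul_le_mul_right hlead (by positivity)
  calc z.im ≤ u := by linarith [Real.add_one_le_exp z.im]
    _ ≤ B * Real.exp (((m + 1 : ℕ) : ℝ) ^ 2) / |Φ (m + 1)| := by
      rw [Real.exp_neg] at hu
      rw [le_div_iff₀ hΦpos]
      field_simp at hu
      linarith

theorem exists_abs_im_le_of_Xi_eq_zero {g : ℕ} (hg : 1 ≤ g) (hΦ : Φ g ≠ 0) :
    ∃ Y : ℝ, ∀ t ∈ Icc (-1 : ℝ) 0, ∀ z : ℂ, Xi g Φ t z = 0 → |z.im| ≤ Y := by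
  obtain ⟨Y, hY⟩ := exists_im_le_of_Xi_eq_zero Φ hg hΦ
  refine ⟨Y, fun t ht z hz => abs_le.2 ⟨?_, hY t ht z hz⟩⟩
  have hconj := hY t ht (conj z) (by rw [Xi_conj, hz, map_zero])
  rw [conj_im] at hconj
  linarith

end ImaginaryBound

theorem eventually_Xi_eq_zero_imp_im_eq_zero {g : ℕ} {Φ : ℕ → ℝ}
    (hreal : ∀ z : ℂ, Xi g Φ 0 z = 0 → z.im = 0)
    (hsimple : ∀ z : ℂ, Xi g Φ 0 z = 0 → deriv (Xi g Φ 0) z ≠ 0) (a : ℂ) :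
    ∀ᶠ q : ℝ × ℂ in 𝓝 (0, a), Xi g Φ q.1 q.2 = 0 → q.2.im = 0 := by
  by_cases ha : Xi g Φ 0 a = 0
  · refine eventually_im_eq_zero_near_real_simple_zero (Xi_conj g Φ) (hasDerivAt_Xi g Φ)
      (continuous_uncurry_XiDeriv g Φ).continuousAt (hreal a ha) ?_
    rw [← (hasDerivAt_Xi g Φ 0 a).deriv]
    exact hsimple a ha
  · filter_upwards [(continuous_uncurry_Xi g Φ).continuousAt.eventually_ne ha] with q hq h
    exact absurd h hq

/-- If `Φ_g ≠ 0` and every zero of `Ξ_0` is real and simple, then there is some `t < 0`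
such that every zero of `Ξ_t` is still real; i.e. the De Bruijn--Newman constant of a
function field `L`-function with simple zeros is strictly negative. -/
theorem lambda_neg_of_simple_zeros (g : ℕ) (hg : 1 ≤ g) (Φ : ℕ → ℝ) (hΦ : Φ g ≠ 0)
    (hreal : ∀ z : ℂ, Xi g Φ 0 z = 0 → z.im = 0)
    (hsimple : ∀ z : ℂ, Xi g Φ 0 z = 0 → deriv (Xi g Φ 0) z ≠ 0) :
    ∃ t : ℝ, t < 0 ∧ ∀ z : ℂ, Xi g Φ t z = 0 → z.im = 0 := by
  obtain ⟨Y, hY⟩ := exists_abs_im_le_of_Xi_eq_zero Φ hg hΦ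
  have hbox : ∀ᶠ t in 𝓝 (0 : ℝ), ∀ w ∈ Icc 0 (2 * π) ×ℂ Icc (-Y) Y, Xi g Φ t w = 0 → w.im = 0 :=
    (isCompact_Icc.reProdIm isCompact_Icc).eventually_forall_of_forall_eventually
      fun a _ => eventually_Xi_eq_zero_imp_im_eq_zero hreal hsimple a
  obtain ⟨t, htbox, ht⟩ := ((hbox.filter_mono nhdsWithin_le_nhds).and
    (Ico_mem_nhdsLT (by norm_num : (-1 : ℝ) < 0))).exists
  refine ⟨t, ht.2, fun z hz => ?_⟩
  obtain ⟨w, hwre, hwim, hw⟩ := exists_re_mem_Ico_Xi_eq g Φ t z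
  rw [← hwim]
  refine htbox w ⟨Ico_subset_Icc_self hwre, ?_⟩ (hw.trans hz)
  simpa only [mem_preimage, hwim, mem_Icc] using abs_le.1 (hY t ⟨ht.1, ht.2.le⟩ z hz)
end

section
/- Let a be a nonzero real number and c > 0 a real number. For t ∈ ℝ, every complex zero of the function z ↦ −a + c e^t cos z is real if and only if t ≥ log(|a|/c). (Applied with c = 2√p and a = a_p(𝒟) the trace of Frobenius, this gives the explicit formula Λ_{D_p} = log(|a_p(𝒟)|/(2√p)) for the De Bruijn–Newman constant of a genus-1 function field L-function.) -/
open Complex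

/-- For `a ≠ 0` and `c > 0`, every complex zero of `z ↦ -a + c e^t cos z` is real if and
only if `t ≥ log (|a| / c)`.  This gives the explicit formula
`Λ_{D_p} = log (|a_p(𝒟)| / (2√p))` for the De Bruijn--Newman constant of a genus-one
function field `L`-function. -/
theorem newman_constant_genus_one (a c : ℝ) (ha : a ≠ 0) (hc : 0 < c) :
    ∀ t : ℝ,
      (∀ z : ℂ, -(a : ℂ) + (c : ℂ) * (Real.exp t : ℂ) * Complex.cos z = 0 → z.im = 0) ↔
        Real.log (|a| / c) ≤ t := by
  intro t
  have hce : (0:ℝ) < c * Real.exp t := mul_pos hc (Real.exp_pos t)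
  set w : ℝ := a / (c * Real.exp t) with hw
  have hwne : w ≠ 0 := div_ne_zero ha hce.ne'
  have hcene : ((c:ℂ) * (Real.exp t : ℂ)) ≠ 0 := by exact_mod_cast hce.ne'
  have key : ∀ z : ℂ, (-(a : ℂ) + (c : ℂ) * (Real.exp t : ℂ) * Complex.cos z = 0) ↔
      Complex.cos z = (w : ℂ) := by
    intro z
    rw [hw]
    simp only [Complex.ofReal_div, Complex.ofReal_mul]
    rw [eq_div_iff hcene]
    constructor
    · intro h; linear_combination h
    · intro h; linear_combination h
  have hlog : Real.log (|a| / c) ≤ t ↔ |w| ≤ 1 := by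
    rw [Real.log_le_iff_le_exp (div_pos (abs_pos.2 ha) hc), hw, abs_div,
      abs_of_pos hce, div_le_one hce, div_le_iff₀ hc]
    constructor
    · intro h; linarith
    · intro h; linarith
  rw [hlog]
  constructor
  · -- all zeros real → |w| ≤ 1
    intro h
    by_contra hlt
    push_neg at hlt
    have hsq : (0:ℝ) < w ^ 2 - 1 := by nlinarith [abs_nonneg w, _root_.sq_abs w]
    set s : ℝ := Real.arsinh (Real.sqrt (w ^ 2 - 1)) with hs
    have hs0 : s ≠ 0 := by
      have h2 : Real.sqrt (w ^ 2 - 1) ≠ 0 := by positivity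
      simpa [hs, Real.arsinh_eq_zero_iff] using h2
    have hcosh : Real.cosh s = |w| := by
      rw [Real.cosh_arsinh, Real.sq_sqrt hsq.le,
        show (1 : ℝ) + (w ^ 2 - 1) = w ^ 2 by ring, Real.sqrt_sq_eq_abs]
    set x : ℂ := if 0 < w then 0 else Real.pi with hx
    have hcos : Complex.cos (x + (s:ℂ) * I) = (w : ℂ) := by
      rw [Complex.cos_add_mul_I]
      rcases lt_or_ge 0 w with hpos | hneg
      · simp [hx, hpos, ← Complex.ofReal_cosh, hcosh, abs_of_pos hpos]
      · have hwneg : w < 0 := lt_of_le_of_ne hneg hwne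
        simp only [hx, if_neg (not_lt.2 hneg), ← Complex.ofReal_cos, ← Complex.ofReal_sin,
          ← Complex.ofReal_cosh, Real.cos_pi, Real.sin_pi, hcosh, abs_of_neg hwneg]
        push_cast
        ring
    have him := h (x + (s:ℂ) * I) ((key _).2 hcos)
    have hxim : x.im = 0 := by
      rw [hx]; split_ifs <;> simp
    simp [Complex.add_im, Complex.mul_im, hxim] at him
    exact hs0 him
  · -- |w| ≤ 1 → all zeros real
    intro hle z hz
    have hcz : Complex.cos z = (w : ℂ) := (key z).1 hz
    rw [Complex.cos_eq] at hcz
    have him := congrArg Complex.im hcz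
    have hre := congrArg Complex.re hcz
    simp [← Complex.ofReal_sin, ← Complex.ofReal_cos, ← Complex.ofReal_sinh,
      ← Complex.ofReal_cosh] at him hre
    rcases him with h1 | h1
    · -- sin z.re = 0
      have hcsq : Real.cos z.re ^ 2 = 1 := by
        nlinarith [Real.sin_sq_add_cos_sq z.re]
      have habs : |Real.cos z.re| = 1 := by
        rw [← Real.sqrt_sq_eq_abs, hcsq, Real.sqrt_one]
      have habs2 : |w| = Real.cosh z.im := by
        rw [← hre, abs_mul, habs, one_mul, abs_of_pos (Real.cosh_pos z.im)]
      by_contra him0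
      have := Real.one_lt_cosh.2 him0
      linarith [hle, habs2 ▸ hle]
    · exact h1
end

section
/- The sum G := Σ_{ε ∈ {±1}} Σ_{j=1}^{g} Σ_{ℓ ∈ ℤ} 2/(γ₁ − (ε γ_j + 2πℓ))², where the two terms with (ε, j, ℓ) = (1, 1, 0) and (−1, 1, 0) are omitted, converges and equals 1/6 − 1/(2γ₁²) + (1/2)·(sin γ₁)^{−2} + (1/2) Σ_{ε ∈ {±1}} Σ_{j=2}^{g} (sin((γ₁ + ε γ_j)/2))^{−2}. -/
/-!
Parseval's identity for `x ↦ exp (2πitx)` on `[0, 1]`, whose Fourier coefficients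
are `(exp (2πit) - 1) / (2πi (t - n))`, gives `∑ₙ 1 / (t - n)² = π² / sin² (πt)`
for `t ∉ ℤ`.
Each block `(ε, j)` of the sum is such a lattice sum at `c = γ₁ - ε γ_j`, rescaled by `2π`.
The block `(1, 1)` has `c = 0` and, with its `ℓ = 0` term removed, equals `ζ(2) / π² = 1/6`;
the block `(-1, 1)` has `c = 2γ₁` and loses the term `2 / (2γ₁)² = 1 / (2γ₁²)`.
-/

open Real

section Fourier

open Complex

lemma fourierCoeffOn_exp_two_pi_I_mul (t : ℝ) (n : ℤ) (htn : t ≠ n) :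
    fourierCoeffOn zero_lt_one (fun x : ℝ => exp (2 * π * I * t * x)) n =
      (exp (2 * π * I * t) - 1) / (2 * π * I * (t - n)) := by
  have hc : 2 * π * I * ((t : ℂ) - n) ≠ 0 := by
    have : (t : ℂ) - n ≠ 0 := sub_ne_zero.mpr (by exact_mod_cast htn)
    simp [this, pi_ne_zero, I_ne_zero]
  have hexponent (x : ℝ) :
      2 * π * I * ((-n : ℤ) : ℂ) * x / ((1 - 0 : ℝ) : ℂ) + 2 * π * I * t * x =
        2 * π * I * (t - n) * x := by
    push_cast
    ring
  have hperiodic : exp (2 * π * I * (t - n)) = exp (2 * π * I * t) :=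
    Complex.exp_eq_exp_iff_exists_int.mpr ⟨-n, by push_cast; ring⟩
  rw [fourierCoeffOn_eq_integral]
  simp_rw [fourier_coe_apply, smul_eq_mul, ← Complex.exp_add, hexponent,
    integral_exp_mul_complex hc]
  simp [hperiodic]

lemma norm_sq_fourierCoeffOn_exp_two_pi_I_mul (t : ℝ) (n : ℤ) (htn : t ≠ n) :
    ‖fourierCoeffOn zero_lt_one (fun x : ℝ => exp (2 * π * I * t * x)) n‖ ^ 2 =
      Real.sin (π * t) ^ 2 / π ^ 2 * (1 / (t - n) ^ 2) := by
  have ht : t - n ≠ 0 := sub_ne_zero.mpr htn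
  rw [fourierCoeffOn_exp_two_pi_I_mul t n htn, norm_div,
    show 2 * π * I * t = I * ((2 * π * t : ℝ) : ℂ) by push_cast; ring,
    norm_exp_I_mul_ofReal_sub_one,
    show 2 * π * I * ((t : ℂ) - n) = ((2 * π * (t - n) : ℝ) : ℂ) * I by push_cast; ring]
  simp only [norm_mul, norm_I, mul_one, Complex.norm_real, Real.norm_eq_abs]
  rw [show 2 * π * t / 2 = π * t by ring]
  field_simp
  simp only [sq_abs]
  ring

lemma hasSum_one_div_sub_int_sq {t : ℝ} (ht : Real.sin (π * t) ≠ 0) :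
    HasSum (fun n : ℤ => 1 / (t - n) ^ 2) (π ^ 2 / Real.sin (π * t) ^ 2) := by
  have htn (n : ℤ) : t ≠ n := by
    rintro rfl
    exact ht (by simpa [mul_comm] using Real.sin_int_mul_pi n)
  have hnorm (x : ℝ) : ‖exp (2 * π * I * t * x)‖ = 1 := by
    rw [show 2 * π * I * t * x = ((2 * π * t * x : ℝ) : ℂ) * I by push_cast; ring,
      norm_exp_ofReal_mul_I]
  have hL2 : MeasureTheory.MemLp (fun x : ℝ => exp (2 * π * I * t * x)) 2
      (MeasureTheory.volume.restrict (Set.Ioc 0 1)) :=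
    MeasureTheory.MemLp.of_bound (by fun_prop) 1
      (Filter.Eventually.of_forall fun x => (hnorm x).le)
  have parseval : HasSum (fun n : ℤ => Real.sin (π * t) ^ 2 / π ^ 2 * (1 / (t - n) ^ 2)) 1 := by
    have := hasSum_sq_fourierCoeffOn zero_lt_one hL2
    simp_rw [norm_sq_fourierCoeffOn_exp_two_pi_I_mul t _ (htn _), hnorm] at this
    simpa using this
  have := parseval.mul_left (π ^ 2 / Real.sin (π * t) ^ 2)
  rw [mul_one] at this
  refine this.congr_fun fun n => ?_
  rw [← mul_assoc, div_mul_div_cancel₀ (pow_ne_zero 2 ht), div_self (pow_ne_zero 2 pi_ne_zero),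
    one_mul]

end Fourier

lemma hasSum_two_div_sq_sub_two_pi_mul_int {c : ℝ} (hc : Real.sin (c / 2) ≠ 0) :
    HasSum (fun ℓ : ℤ => 2 / (c - 2 * π * ℓ) ^ 2)
      ((1 / 2) * (Real.sin (c / 2) ^ 2)⁻¹) := by
  have hπt : π * (c / (2 * π)) = c / 2 := by field_simp
  have h := hasSum_one_div_sub_int_sq (t := c / (2 * π)) (hπt ▸ hc)
  rw [hπt] at h
  rw [show (1 / 2) * (Real.sin (c / 2) ^ 2)⁻¹ =
      1 / (2 * π ^ 2) * (π ^ 2 / Real.sin (c / 2) ^ 2) by field_simp]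
  refine (h.mul_left _).congr_fun fun ℓ => ?_
  field_simp

lemma hasSum_one_div_int_sq : HasSum (fun n : ℤ => 1 / (n : ℝ) ^ 2) (π ^ 2 / 3) := by
  have h := HasSum.of_nat_of_neg (f := fun n : ℤ => 1 / (n : ℝ) ^ 2)
    (by simpa using hasSum_zeta_two) (by simpa using hasSum_zeta_two)
  rwa [show π ^ 2 / 6 + π ^ 2 / 6 - 1 / ((0 : ℤ) : ℝ) ^ 2 = π ^ 2 / 3 by simp; ring] at h

lemma hasSum_ite_zero_two_div_sq_two_pi_mul_int :
    HasSum (fun ℓ : ℤ => if ℓ = 0 then 0 else 2 / (0 - 2 * π * ℓ) ^ 2) (1 / 6) := by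
  rw [show (1 / 6 : ℝ) = 1 / (2 * π ^ 2) * (π ^ 2 / 3) by field_simp; ring]
  refine (hasSum_one_div_int_sq.mul_left _).congr_fun fun ℓ => ?_
  split_ifs with hℓ
  · simp [hℓ]
  · field_simp
    ring

lemma sin_half_ne_zero {x : ℝ} (hx0 : x ≠ 0) (hx : |x| < 2 * π) : Real.sin (x / 2) ≠ 0 := by
  obtain ⟨hlo, hhi⟩ := abs_lt.mp hx
  rw [Ne, Real.sin_eq_zero_iff_of_lt_of_lt (by linarith) (by linarith)]
  exact div_ne_zero hx0 two_ne_zero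

lemma sin_half_sub_sign_mul_ne_zero {a b ε : ℝ} (ha : 0 < a) (hab : a < b) (hb : b < π)
    (hε : ε ∈ ({1, -1} : Finset ℝ)) : Real.sin ((a - ε * b) / 2) ≠ 0 := by
  simp only [Finset.mem_insert, Finset.mem_singleton] at hε
  rcases hε with rfl | rfl
  · exact sin_half_ne_zero (by linarith : a - 1 * b < 0).ne
      (abs_lt.mpr ⟨by linarith, by linarith⟩)
  · exact sin_half_ne_zero (by linarith : 0 < a - -1 * b).ne'
      (abs_lt.mpr ⟨by linarith, by linarith⟩)

lemma sum_sign_sum_Icc_ite_eq (g : ℕ) (hg : 1 ≤ g) (γ : ℕ → ℝ) (ℓ : ℤ) :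
    ∑ ε ∈ ({1, -1} : Finset ℝ), ∑ j ∈ Finset.Icc 1 g,
        (if j = 1 ∧ ℓ = 0 then 0 else 2 / (γ 1 - (ε * γ j + 2 * π * (ℓ : ℝ))) ^ 2) =
      ((if ℓ = 0 then 0 else 2 / (0 - 2 * π * ℓ) ^ 2) +
        (if ℓ = 0 then 0 else 2 / ((γ 1 - -1 * γ 1) - 2 * π * ℓ) ^ 2)) +
      ∑ ε ∈ ({1, -1} : Finset ℝ), ∑ j ∈ Finset.Icc 2 g,
        2 / ((γ 1 - ε * γ j) - 2 * π * ℓ) ^ 2 := by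
  rw [← Finset.insert_Icc_add_one_left_eq_Icc hg]
  simp only [Finset.sum_insert (by simp : 1 ∉ Finset.Icc (1 + 1) g), Finset.sum_add_distrib]
  congr 1
  · rw [Finset.sum_pair (by norm_num)]
    simp only [true_and]
    split_ifs
    · rfl
    · ring
  · refine Finset.sum_congr rfl fun ε _ => Finset.sum_congr rfl fun j hj => ?_
    rw [if_neg (by simp at hj; omega), sub_add_eq_sub_sub]

/-- The zero-repulsion sum
`G = ∑_{ε ∈ {±1}} ∑_{j=1}^g ∑_{ℓ ∈ ℤ} 2 / (γ₁ - (ε γ_j + 2πℓ))²`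
(with the two terms `(ε, j, ℓ) = (±1, 1, 0)` omitted) converges, with value
`1/6 - 1/(2γ₁²) + (1/2) csc² γ₁ + (1/2) ∑_{ε ∈ {±1}} ∑_{j=2}^g csc²((γ₁ + ε γ_j)/2)`. -/
theorem zero_repulsion_sum (g : ℕ) (hg : 1 ≤ g) (γ : ℕ → ℝ)
    (hpos : 0 < γ 1)
    (hmono : ∀ j : ℕ, 1 ≤ j → j < g → γ j < γ (j + 1))
    (hlt : γ g < π) :
    HasSum
      (fun ℓ : ℤ => ∑ ε ∈ ({1, -1} : Finset ℝ), ∑ j ∈ Finset.Icc 1 g,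
        if j = 1 ∧ ℓ = 0 then 0 else 2 / (γ 1 - (ε * γ j + 2 * π * (ℓ : ℝ))) ^ 2)
      (1 / 6 - 1 / (2 * γ 1 ^ 2) + (1 / 2) * (Real.sin (γ 1) ^ 2)⁻¹ +
        (1 / 2) * ∑ ε ∈ ({1, -1} : Finset ℝ), ∑ j ∈ Finset.Icc 2 g,
          (Real.sin ((γ 1 + ε * γ j) / 2) ^ 2)⁻¹) := by
  have hγ : StrictMonoOn γ (Set.Icc 1 g) :=
    strictMonoOn_of_lt_add_one Set.ordConnected_Icc fun j _ hj hj' => hmono j hj.1 hj'.2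
  have hγ1 : γ 1 < π := (hγ.monotoneOn ⟨le_rfl, hg⟩ ⟨hg, le_rfl⟩ hg).trans_lt hlt
  have hsin₁ : Real.sin ((γ 1 - -1 * γ 1) / 2) ≠ 0 :=
    sin_half_ne_zero (by linarith : 0 < γ 1 - -1 * γ 1).ne'
      (abs_lt.mpr ⟨by linarith, by linarith⟩)
  have hsin (ε : ℝ) (hε : ε ∈ ({1, -1} : Finset ℝ)) (j : ℕ) (hj : j ∈ Finset.Icc 2 g) :
      Real.sin ((γ 1 - ε * γ j) / 2) ≠ 0 := by
    obtain ⟨h2j, hjg⟩ := Finset.mem_Icc.mp hj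
    exact sin_half_sub_sign_mul_ne_zero hpos (hγ ⟨le_rfl, hg⟩ ⟨by omega, hjg⟩ (by omega))
      ((hγ.monotoneOn ⟨by omega, hjg⟩ ⟨hg, le_rfl⟩ hjg).trans_lt hlt) hε
  rw [funext (sum_sign_sum_Icc_ite_eq g hg γ)]
  convert (hasSum_ite_zero_two_div_sq_two_pi_mul_int.add
    (hasSum_ite_sub_hasSum (hasSum_two_div_sq_sub_two_pi_mul_int hsin₁) 0)).add
    (hasSum_sum fun ε hε => hasSum_sum fun j hj =>
      hasSum_two_div_sq_sub_two_pi_mul_int (hsin ε hε j hj)) using 1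
  rw [Finset.mul_sum, Finset.sum_pair (by norm_num), Finset.sum_pair (by norm_num),
    ← Finset.mul_sum, ← Finset.mul_sum, show (γ 1 - -1 * γ 1) / 2 = γ 1 by ring]
  simp only [Int.cast_zero, mul_zero, sub_zero, one_mul, neg_one_mul, sub_neg_eq_add,
    ← sub_eq_add_neg]
  field_simp
  ring
end

section
/- For every real number x with 0 < |x| ≤ 1/2, one has 1/(sin x)² ≤ 1/x² + 0.36 and 1/(sin x)² ≤ 1.1/x². -/
/-! Taylor's bound `|sin x| ≥ |x| (1 - x²/6)` turns both estimates into polynomial inequalities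
in `t = x² ∈ (0, 1/4]`. -/

open Real

theorem sq_mul_one_sub_sq_div_six_sq_le_sin_sq {x : ℝ} (hx : x ^ 2 ≤ 6) :
    x ^ 2 * (1 - x ^ 2 / 6) ^ 2 ≤ sin x ^ 2 := by
  have hcube : |x| ^ 3 = |x| * x ^ 2 := by rw [pow_succ', sq_abs]
  have hsin : |x| * (1 - x ^ 2 / 6) ≤ |sin x| := by
    linarith [abs_sub_abs_le_abs_sub x (sin x), abs_sub_sin_le x]
  calc x ^ 2 * (1 - x ^ 2 / 6) ^ 2 = (|x| * (1 - x ^ 2 / 6)) ^ 2 := by rw [mul_pow, sq_abs]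
    _ ≤ |sin x| ^ 2 := by gcongr; have := abs_nonneg x; nlinarith
    _ = sin x ^ 2 := sq_abs _

theorem one_le_one_add_mul_one_sub_div_six_sq {t : ℝ} (ht₀ : 0 ≤ t) (ht : t ≤ 1 / 4) :
    1 ≤ (1 + 0.36 * t) * (1 - t / 6) ^ 2 := by
  -- `(1 + 0.36 t)(1 - t/6)² - 1 = t (2/75 - 83/900 t) + t³/100`
  nlinarith [mul_nonneg ht₀ (by linarith : (0 : ℝ) ≤ 2 / 75 - 83 / 900 * t), pow_nonneg ht₀ 3]

theorem one_le_mul_one_sub_div_six_sq {t : ℝ} (ht : t ≤ 1 / 4) :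
    1 ≤ 1.1 * (1 - t / 6) ^ 2 := by
  nlinarith

theorem inv_mul_le_div_of_one_le_mul {t d c : ℝ} (ht : 0 < t) (hd : 0 < d) (h : 1 ≤ c * d) :
    (t * d)⁻¹ ≤ c / t := by
  rw [inv_le_iff_one_le_mul₀ (by positivity)]
  calc 1 ≤ c * d := h
    _ = c / t * (t * d) := by field_simp

/-- For `0 < |x| ≤ 1/2` one has `csc² x ≤ 1/x² + 0.36` and `csc² x ≤ 1.1/x²`. -/
theorem csc_sq_bounds (x : ℝ) (hx : 0 < |x|) (hx2 : |x| ≤ 1 / 2) :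
    (Real.sin x ^ 2)⁻¹ ≤ 1 / x ^ 2 + 0.36 ∧ (Real.sin x ^ 2)⁻¹ ≤ 1.1 / x ^ 2 := by
  have hx_sq : x ^ 2 ≤ 1 / 4 := by nlinarith [sq_abs x, abs_nonneg x]
  have hx_sq_pos : 0 < x ^ 2 := by rw [← sq_abs]; positivity
  have hd : 0 < (1 - x ^ 2 / 6) ^ 2 := pow_pos (by linarith) 2
  have hcsc : (sin x ^ 2)⁻¹ ≤ (x ^ 2 * (1 - x ^ 2 / 6) ^ 2)⁻¹ :=
    inv_anti₀ (by positivity) (sq_mul_one_sub_sq_div_six_sq_le_sin_sq (by linarith))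
  constructor
  · calc (sin x ^ 2)⁻¹ ≤ (1 + 0.36 * x ^ 2) / x ^ 2 := hcsc.trans <|
          inv_mul_le_div_of_one_le_mul hx_sq_pos hd
            (one_le_one_add_mul_one_sub_div_six_sq hx_sq_pos.le hx_sq)
      _ = 1 / x ^ 2 + 0.36 := by rw [add_div, mul_div_assoc, div_self hx_sq_pos.ne', mul_one]
  · exact hcsc.trans <| inv_mul_le_div_of_one_le_mul hx_sq_pos hd
      (one_le_mul_one_sub_div_six_sq hx_sq)
end

section
/- Suppose g ≥ 13, ((g/π)·γ₁)² ≤ 1/(500g), and 1/2 ≤ (g/π)·γ₂ ≤ 2. Then 5·γ₁²·G < 1, where G := 1/6 − 1/(2γ₁²) + (1/2)·(sin γ₁)^{−2} + (1/2) Σ_{ε ∈ {±1}} Σ_{j=2}^{g} (sin((γ₁ + ε γ_j)/2))^{−2}. -/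
open Real Finset

/-!
Expanding, `5γ₁²G = (5/6)γ₁² - 5/2 + (5/2)·γ₁² csc² γ₁ + (5/2)·γ₁² S`, where `S` is the double
sum. The hypothesis on `γ₁` says `γ₁² ≤ π²/(500 g³)`, so `γ₁` is tiny and `γ₁² csc² γ₁` barely
exceeds `1` (from `sin x > x - x³/6`). By Jordan's inequality every term of `S` is at most
`(π/(γ₂ - γ₁))²`, and `γ₂ - γ₁ ≥ π/(2g) - π/(80g)`, so
`γ₁² S ≤ π²/(500 g³) · 2g · (80g/39)² < 0.17`.
-/

lemma sub_div_pi_le_sin_half_sub {a b : ℝ} (hab : a ≤ b) (hb : b - a ≤ π) :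
    (b - a) / π ≤ sin ((b - a) / 2) := by
  calc (b - a) / π = 2 / π * ((b - a) / 2) := by ring
    _ ≤ _ := mul_le_sin (by linarith) (by linarith)

lemma sin_half_sub_le_sin_half_add {a b : ℝ} (ha : 0 ≤ a) (hab : a ≤ b) (hb : b ≤ π) :
    sin ((b - a) / 2) ≤ sin ((a + b) / 2) := by
  have hsin : 0 ≤ sin (a / 2) := sin_nonneg_of_nonneg_of_le_pi (by linarith) (by linarith)
  have hcos : 0 ≤ cos (b / 2) := cos_nonneg_of_mem_Icc ⟨by linarith, by linarith⟩
  have hdiff := sin_sub_sin ((a + b) / 2) ((b - a) / 2)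
  rw [show ((a + b) / 2 - (b - a) / 2) / 2 = a / 2 by ring,
    show ((a + b) / 2 + (b - a) / 2) / 2 = b / 2 by ring] at hdiff
  nlinarith [mul_nonneg hsin hcos]

lemma inv_sin_sq_half_add_mul_le {a b ε : ℝ} (ha : 0 ≤ a) (hab : a < b) (hb : b ≤ π)
    (hε : ε = 1 ∨ ε = -1) :
    (sin ((a + ε * b) / 2) ^ 2)⁻¹ ≤ (π / (b - a)) ^ 2 := by
  have hjordan := sub_div_pi_le_sin_half_sub hab.le (by linarith)
  have hsin : (b - a) / π ≤ |sin ((a + ε * b) / 2)| := by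
    rcases hε with rfl | rfl
    · rw [one_mul]
      exact (hjordan.trans (sin_half_sub_le_sin_half_add ha hab.le hb)).trans (le_abs_self _)
    · rw [show (a + -1 * b) / 2 = -((b - a) / 2) by ring, sin_neg, abs_neg]
      exact hjordan.trans (le_abs_self _)
  have hpos : 0 < (b - a) / π := div_pos (by linarith) pi_pos
  calc (sin ((a + ε * b) / 2) ^ 2)⁻¹ = (|sin ((a + ε * b) / 2)| ^ 2)⁻¹ := by rw [sq_abs]
    _ ≤ (((b - a) / π) ^ 2)⁻¹ := inv_anti₀ (by positivity) (pow_le_pow_left₀ hpos.le hsin 2)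
    _ = (π / (b - a)) ^ 2 := by rw [← inv_pow, inv_div]

lemma sum_sum_inv_sin_sq_le {g : ℕ} {γ : ℕ → ℝ} (hg : 2 ≤ g) (hγ : StrictMonoOn γ (Set.Icc 1 g))
    (h0 : 0 ≤ γ 1) (hπ : γ g ≤ π) :
    ∑ ε ∈ ({1, -1} : Finset ℝ), ∑ j ∈ Icc 2 g, (sin ((γ 1 + ε * γ j) / 2) ^ 2)⁻¹ ≤
      2 * (g - 1) * (π / (γ 2 - γ 1)) ^ 2 := by
  have h12 : γ 1 < γ 2 := hγ ⟨le_rfl, by omega⟩ ⟨by omega, hg⟩ (by norm_num)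
  calc _ ≤ ∑ ε ∈ ({1, -1} : Finset ℝ), ∑ j ∈ Icc 2 g, (π / (γ 2 - γ 1)) ^ 2 := by
        refine sum_le_sum fun ε hε ↦ sum_le_sum fun j hj ↦ ?_
        obtain ⟨h2j, hjg⟩ := mem_Icc.1 hj
        have hγ2j : γ 2 ≤ γ j := hγ.monotoneOn ⟨by omega, hg⟩ ⟨by omega, hjg⟩ h2j
        have hγjg : γ j ≤ γ g := hγ.monotoneOn ⟨by omega, hjg⟩ ⟨by omega, le_rfl⟩ hjg
        refine (inv_sin_sq_half_add_mul_le h0 (h12.trans_le hγ2j) (hγjg.trans hπ)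
          (by simpa using hε)).trans ?_
        have h1j : 0 < γ j - γ 1 := by linarith
        gcongr
    _ = 2 * (g - 1) * (π / (γ 2 - γ 1)) ^ 2 := by
        rw [sum_const, sum_const, Nat.card_Icc, card_pair (by norm_num),
          show g + 1 - 2 = g - 1 by omega]
        simp [Nat.cast_sub (by omega : 1 ≤ g)]
        ring

lemma sq_mul_inv_sin_sq_le {x : ℝ} (hx : 0 < x) (hx6 : x ^ 2 < 6) :
    x ^ 2 * (sin x ^ 2)⁻¹ ≤ ((1 - x ^ 2 / 6) ^ 2)⁻¹ := by
  have hlow : 0 < x - x ^ 3 / 6 := by nlinarith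
  have hsin : (x - x ^ 3 / 6) ^ 2 ≤ sin x ^ 2 :=
    pow_le_pow_left₀ hlow.le (sin_gt_sub_cube hx).le 2
  calc x ^ 2 * (sin x ^ 2)⁻¹ ≤ x ^ 2 * ((x - x ^ 3 / 6) ^ 2)⁻¹ := by gcongr
    _ = ((1 - x ^ 2 / 6) ^ 2)⁻¹ := by field_simp

lemma sq_mul_le_pi_sq_of_rescaled_sq_le {g x : ℝ} (hg : 0 < g)
    (h : (g / π * x) ^ 2 ≤ 1 / (500 * g)) : x ^ 2 * (500 * g ^ 3) ≤ π ^ 2 := by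
  rw [mul_pow, div_pow, div_mul_eq_mul_div, div_le_div_iff₀ (by positivity) (by positivity)] at h
  nlinarith

lemma eighty_mul_mul_le_pi {g x : ℝ} (hg : 13 ≤ g) (h : x ^ 2 * (500 * g ^ 3) ≤ π ^ 2) :
    80 * g * x ≤ π := by
  refine le_of_sq_le_sq ?_ pi_pos.le
  nlinarith [mul_nonneg (mul_nonneg (sq_nonneg x) (sq_nonneg g)) (by linarith : 0 ≤ 500 * g - 6400)]

lemma sq_le_of_sq_mul_le_pi_sq {g x : ℝ} (hg : 13 ≤ g) (h : x ^ 2 * (500 * g ^ 3) ≤ π ^ 2) :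
    x ^ 2 ≤ 1 / 100000 := by
  have hg3 : 13 ^ 3 ≤ g ^ 3 := pow_le_pow_left₀ (by norm_num) hg 3
  nlinarith [pi_lt_d2, pi_pos, mul_nonneg (sq_nonneg x) (by linarith : 0 ≤ g ^ 3 - 13 ^ 3)]

lemma sq_mul_two_mul_div_sub_sq_le {g x y : ℝ} (hg : 13 ≤ g)
    (h : x ^ 2 * (500 * g ^ 3) ≤ π ^ 2) (hy : π ≤ 2 * g * y) :
    x ^ 2 * (2 * (g - 1) * (π / (y - x)) ^ 2) ≤ 17 / 100 := by
  have h80 := eighty_mul_mul_le_pi hg h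
  have hyx : 39 * π ≤ 80 * g * (y - x) := by linarith
  have hgap : π / (y - x) ≤ 80 * g / 39 := by
    have : 0 < y - x := by nlinarith [pi_pos]
    rw [div_le_div_iff₀ this (by norm_num)]
    linarith
  have hgap_sq : (π / (y - x)) ^ 2 ≤ (80 * g / 39) ^ 2 :=
    pow_le_pow_left₀ (div_nonneg pi_pos.le (by nlinarith [pi_pos])) hgap 2
  calc x ^ 2 * (2 * (g - 1) * (π / (y - x)) ^ 2)
      ≤ x ^ 2 * (2 * g * (80 * g / 39) ^ 2) := by gcongr; linarith
    _ = 12800 / 760500 * (x ^ 2 * (500 * g ^ 3)) := by ring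
    _ ≤ 12800 / 760500 * π ^ 2 := by gcongr
    _ ≤ 17 / 100 := by nlinarith [pi_lt_d2, pi_pos]

theorem five_gamma_sq_G_lt_one_general (g : ℕ) (hg : 13 ≤ g) (γ : ℕ → ℝ)
    (hpos : 0 < γ 1)
    (hmono : ∀ j : ℕ, 1 ≤ j → j < g → γ j < γ (j + 1))
    (hlt : γ g < π)
    (h1 : ((g / π) * γ 1) ^ 2 ≤ 1 / (500 * g))
    (h2 : 1 / 2 ≤ (g / π) * γ 2) :
    5 * γ 1 ^ 2 *
        (1 / 6 - 1 / (2 * γ 1 ^ 2) + (1 / 2) * (Real.sin (γ 1) ^ 2)⁻¹ +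
          (1 / 2) * ∑ ε ∈ ({1, -1} : Finset ℝ), ∑ j ∈ Finset.Icc 2 g,
            (Real.sin ((γ 1 + ε * γ j) / 2) ^ 2)⁻¹) < 1 := by
  have hgR : (13 : ℝ) ≤ g := by exact_mod_cast hg
  have hγ : StrictMonoOn γ (Set.Icc 1 g) :=
    strictMonoOn_of_lt_add_one Set.ordConnected_Icc fun j _ hj hj' ↦ hmono j hj.1 hj'.2
  have hγ1 := sq_mul_le_pi_sq_of_rescaled_sq_le (by linarith) h1
  have hsmall := sq_le_of_sq_mul_le_pi_sq hgR hγ1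
  have hγ2 : π ≤ 2 * g * γ 2 := by
    rw [div_mul_eq_mul_div, le_div_iff₀ pi_pos] at h2
    linarith
  have hS := sum_sum_inv_sin_sq_le (by omega) hγ hpos.le hlt.le
  have hSγ := sq_mul_two_mul_div_sub_sq_le hgR hγ1 hγ2
  have hsin := sq_mul_inv_sin_sq_le hpos (by linarith)
  have hsin' : ((1 - γ 1 ^ 2 / 6) ^ 2)⁻¹ ≤ 251 / 250 := by
    rw [inv_le_comm₀ (by nlinarith) (by norm_num)]
    nlinarith
  set C := (sin (γ 1) ^ 2)⁻¹
  set S := ∑ ε ∈ ({1, -1} : Finset ℝ), ∑ j ∈ Icc 2 g, (sin ((γ 1 + ε * γ j) / 2) ^ 2)⁻¹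
  have hexpand : 5 * γ 1 ^ 2 * (1 / 6 - 1 / (2 * γ 1 ^ 2) + 1 / 2 * C + 1 / 2 * S) =
      5 / 6 * γ 1 ^ 2 - 5 / 2 + 5 / 2 * (γ 1 ^ 2 * C) + 5 / 2 * (γ 1 ^ 2 * S) := by
    field_simp
  rw [hexpand]
  linarith [mul_le_mul_of_nonneg_left hS (sq_nonneg (γ 1)), hsin.trans hsin']

/-- If `g ≥ 13`, the rescaled first zero satisfies `((g/π)γ₁)² ≤ 1/(500g)` and the
rescaled second zero satisfies `1/2 ≤ (g/π)γ₂ ≤ 2`, then `5γ₁²G < 1`, where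
`G = 1/6 - 1/(2γ₁²) + (1/2) csc² γ₁ + (1/2) ∑_{ε ∈ {±1}} ∑_{j=2}^g csc²((γ₁ + ε γ_j)/2)`. -/
theorem five_gamma_sq_G_lt_one (g : ℕ) (hg : 13 ≤ g) (γ : ℕ → ℝ)
    (hpos : 0 < γ 1)
    (hmono : ∀ j : ℕ, 1 ≤ j → j < g → γ j < γ (j + 1))
    (hlt : γ g < π)
    (h1 : ((g / π) * γ 1) ^ 2 ≤ 1 / (500 * g))
    (h2 : 1 / 2 ≤ (g / π) * γ 2) (h2' : (g / π) * γ 2 ≤ 2) :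
    5 * γ 1 ^ 2 *
        (1 / 6 - 1 / (2 * γ 1 ^ 2) + (1 / 2) * (Real.sin (γ 1) ^ 2)⁻¹ +
          (1 / 2) * ∑ ε ∈ ({1, -1} : Finset ℝ), ∑ j ∈ Finset.Icc 2 g,
            (Real.sin ((γ 1 + ε * γ j) / 2) ^ 2)⁻¹) < 1 :=
  five_gamma_sq_G_lt_one_general g hg γ hpos hmono hlt h1 h2
end
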